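/- Let 0 < a < b, λ ∈ [0,1], q > 1 and 1/p + 1/q = 1. With H = 2ab/(a+b), A = (a+b)/2, G = √(ab), and L = (b−a)/(ln b − ln a), the following inequality holds: |(1−λ)·H + λ·A − G²/L| ≤ ( ab(b−a)·C₄(λ,p)^{1/p} / (4·[(1−q)(1−2q)(b−a)²]^{1/q}) )·{ ( C₅(q;a,b) + C₆(q;a,b) )^{1/q} + ( C₆(q;b,a) + C₅(q;b,a) )^{1/q} }. -/

import Mathlib

/-!
Put `f x = a b / x` and `m = (a + b) / 2`. Then `H = f m`, `A = (f a + f b) / 2` and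
`G² / L = (b - a)⁻¹ ∫ₐᵇ f`, so integrating by parts on the halves `[a, m]` and `[m, b]`, each
parametrised from its outer endpoint towards `m`, writes `(1 - λ) H + λ A - G² / L` as
`a b (b - a) / 4` times a difference of two Peano-kernel integrals `∫₀¹ (t - λ) / x(t)² dt`.
Hölder's inequality bounds each of them by `‖t - λ‖_p ‖x(t)⁻²‖_q`; the first factor is
`C₄(λ, p)^(1/p)`, and the `q`-th power of the second is the elementary integral
`(C₅ + C₆) / ((1 - q)(1 - 2q)(b - a)²)`.
-/

open MeasureTheory Set

/-- `C₄(λ, p)` from Theorem 2.4. -/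
noncomputable def C4 (lam p : ℝ) : ℝ := (lam ^ (p + 1) + (1 - lam) ^ (p + 1)) / (p + 1)

/-- `C₅(q; u, ϑ)` from Theorem 2.4. -/
noncomputable def C5 (q u v : ℝ) : ℝ :=
  ((u + v) / 2) ^ (1 - 2 * q) * ((v - 3 * u) / 2 - q * (v - u)) + u ^ (2 - 2 * q)

/-- `C₆(q; u, ϑ)` from Theorem 2.4. -/
noncomputable def C6 (q u v : ℝ) : ℝ :=
  ((u + v) / 2) ^ (1 - 2 * q) * ((3 * v - u) / 2 - q * (v - u))
    + u ^ (1 - 2 * q) * (u - 2 * v + 2 * q * (v - u))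

open intervalIntegral

lemma ContinuousOn.memLp_restrict_Ioc {f : ℝ → ℝ} {a b : ℝ} (hf : ContinuousOn f (Icc a b))
    (p : ENNReal) : MemLp f p (volume.restrict (Ioc a b)) := by
  obtain ⟨C, hC⟩ := isCompact_Icc.exists_bound_of_continuousOn hf
  exact MemLp.of_bound ((hf.mono Ioc_subset_Icc_self).aestronglyMeasurable measurableSet_Ioc) C
    ((ae_restrict_iff' measurableSet_Ioc).2 (ae_of_all _ fun x hx ↦ hC x (Ioc_subset_Icc_self hx)))

theorem abs_intervalIntegral_mul_le_Lp_mul_Lq {p q a b : ℝ} {f g : ℝ → ℝ}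
    (hpq : p.HolderConjugate q) (hab : a ≤ b)
    (hf : ContinuousOn f (Icc a b)) (hg : ContinuousOn g (Icc a b)) :
    |∫ x in a..b, f x * g x| ≤
      (∫ x in a..b, |f x| ^ p) ^ (1 / p) * (∫ x in a..b, |g x| ^ q) ^ (1 / q) := by
  simp only [integral_of_le hab, ← Real.norm_eq_abs]
  calc ‖∫ x in Ioc a b, f x * g x‖ ≤ ∫ x in Ioc a b, ‖f x‖ * ‖g x‖ := by
        simpa only [norm_mul] using MeasureTheory.norm_integral_le_integral_norm fun x ↦ f x * g x
    _ ≤ _ := integral_mul_norm_le_Lp_mul_Lq hpq (hf.memLp_restrict_Ioc _) (hg.memLp_restrict_Ioc _)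

lemma add_mul_pos_of_mem_Icc {c d t : ℝ} (hc : 0 < c) (hcd : 0 < c + d) (ht : t ∈ Icc (0 : ℝ) 1) :
    0 < c + d * t := by
  rcases le_total 0 d with hd | hd
  · nlinarith [mul_nonneg hd ht.1]
  · nlinarith [mul_nonneg (neg_nonneg.2 hd) (sub_nonneg.2 ht.2)]

theorem integral_abs_sub_rpow {μ p : ℝ} (hp : 0 ≤ p) (hμ : μ ∈ Icc (0 : ℝ) 1) :
    ∫ t in (0 : ℝ)..1, |t - μ| ^ p = C4 μ p := by
  have hcont : Continuous fun t : ℝ ↦ |t - μ| ^ p :=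
    (continuous_id.sub continuous_const).abs.rpow_const fun _ ↦ Or.inr hp
  have hleft : ∫ t in (0 : ℝ)..μ, |t - μ| ^ p = ∫ t in (0 : ℝ)..μ, (μ - t) ^ p := by
    refine integral_congr fun t ht ↦ ?_
    rw [uIcc_of_le hμ.1] at ht
    rw [abs_of_nonpos (by linarith [ht.2]), neg_sub]
  have hright : ∫ t in μ..1, |t - μ| ^ p = ∫ t in μ..1, (t - μ) ^ p := by
    refine integral_congr fun t ht ↦ ?_
    rw [uIcc_of_le hμ.2] at ht
    rw [abs_of_nonneg (by linarith [ht.1])]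
  rw [← integral_add_adjacent_intervals (hcont.intervalIntegrable _ _)
    (hcont.intervalIntegrable _ _), hleft, hright,
    integral_comp_sub_left (fun u ↦ u ^ p), integral_comp_sub_right (fun u ↦ u ^ p),
    integral_rpow (Or.inl (by linarith)), integral_rpow (Or.inl (by linarith)), C4]
  simp only [sub_self, sub_zero, Real.zero_rpow (by linarith : p + 1 ≠ 0)]
  ring

theorem integral_affine_rpow {c d r : ℝ} (hc : 0 < c) (hcd : 0 < c + d) (hd : d ≠ 0)
    (hr : r ≠ -1) :
    ∫ t in (0 : ℝ)..1, (c + d * t) ^ r = ((c + d) ^ (r + 1) - c ^ (r + 1)) / (d * (r + 1)) := by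
  have hzero : (0 : ℝ) ∉ uIcc c (c + d) := fun h ↦ by
    rcases le_total c (c + d) with hle | hle
    · rw [uIcc_of_le hle] at h; linarith [h.1]
    · rw [uIcc_of_ge hle] at h; linarith [h.1]
  rw [integral_comp_add_mul (fun x ↦ x ^ r) hd, integral_rpow (Or.inr ⟨hr, by simpa using hzero⟩)]
  simp only [mul_zero, add_zero, mul_one, smul_eq_mul]
  field_simp

theorem integral_sub_div_sq {c d μ : ℝ} (hc : 0 < c) (hcd : 0 < c + d) (hd : d ≠ 0) :
    ∫ t in (0 : ℝ)..1, (t - μ) / (c + d * t) ^ 2 =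
      (Real.log (c + d) - Real.log c + (c + d * μ) * ((c + d)⁻¹ - c⁻¹)) / d ^ 2 := by
  have hpos : ∀ t ∈ uIcc (0 : ℝ) 1, 0 < c + d * t := fun t ht ↦
    add_mul_pos_of_mem_Icc hc hcd (by rwa [uIcc_of_le zero_le_one] at ht)
  have hderiv : ∀ t ∈ uIcc (0 : ℝ) 1, HasDerivAt
      (fun t ↦ (Real.log (c + d * t) + (c + d * μ) * (c + d * t)⁻¹) / d ^ 2)
      ((t - μ) / (c + d * t) ^ 2) t := fun t ht ↦ by
    have hne : c + d * t ≠ 0 := (hpos t ht).ne'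
    have hlin : HasDerivAt (fun t : ℝ ↦ c + d * t) d t := by
      simpa using ((hasDerivAt_id t).const_mul d).const_add c
    exact (((hlin.log hne).add ((hlin.inv hne).const_mul (c + d * μ))).div_const (d ^ 2)).congr_deriv
      (by field_simp; ring)
  rw [integral_eq_sub_of_hasDerivAt hderiv]
  · simp only [mul_one, mul_zero, add_zero]
    ring
  · refine ContinuousOn.intervalIntegrable fun t ht ↦ ?_
    exact ((continuousAt_id.sub continuousAt_const).div
      ((continuousAt_const.add (continuousAt_const.mul continuousAt_id)).pow 2)
      (pow_ne_zero 2 (hpos t ht).ne')).continuousWithinAt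

theorem abs_integral_sub_div_sq_le {p q c d μ : ℝ} (hpq : p.HolderConjugate q)
    (hμ : μ ∈ Icc (0 : ℝ) 1) (hc : 0 < c) (hcd : 0 < c + d) :
    |∫ t in (0 : ℝ)..1, (t - μ) / (c + d * t) ^ 2| ≤
      C4 μ p ^ (1 / p) * (∫ t in (0 : ℝ)..1, (c + d * t) ^ (-(2 * q))) ^ (1 / q) := by
  have hpos : ∀ t ∈ Icc (0 : ℝ) 1, 0 < c + d * t := fun t ht ↦ add_mul_pos_of_mem_Icc hc hcd ht
  have hweight : ∫ t in (0 : ℝ)..1, |((c + d * t) ^ 2)⁻¹| ^ q =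
      ∫ t in (0 : ℝ)..1, (c + d * t) ^ (-(2 * q)) := by
    refine integral_congr fun t ht ↦ ?_
    have ht' := hpos t (by rwa [uIcc_of_le zero_le_one] at ht)
    rw [abs_of_pos (by positivity), Real.inv_rpow (by positivity), ← Real.rpow_natCast,
      ← Real.rpow_mul ht'.le, Real.rpow_neg ht'.le]
    norm_num
  have hcont : ContinuousOn (fun t ↦ ((c + d * t) ^ 2)⁻¹) (Icc (0 : ℝ) 1) := fun t ht ↦
    ((continuousAt_const.add (continuousAt_const.mul continuousAt_id)).pow 2).inv₀
      (pow_ne_zero 2 (hpos t ht).ne') |>.continuousWithinAt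
  calc _ = |∫ t in (0 : ℝ)..1, (t - μ) * ((c + d * t) ^ 2)⁻¹| := by simp only [div_eq_mul_inv]
    _ ≤ (∫ t in (0 : ℝ)..1, |t - μ| ^ p) ^ (1 / p) *
        (∫ t in (0 : ℝ)..1, |((c + d * t) ^ 2)⁻¹| ^ q) ^ (1 / q) :=
        abs_intervalIntegral_mul_le_Lp_mul_Lq hpq zero_le_one (by fun_prop) hcont
    _ = _ := by rw [integral_abs_sub_rpow hpq.nonneg hμ, hweight]

theorem C5_add_C6 {q u : ℝ} (v : ℝ) (hu : 0 < u) :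
    C5 q u v + C6 q u v = 2 * (q - 1) * (v - u) * (u ^ (1 - 2 * q) - ((u + v) / 2) ^ (1 - 2 * q)) := by
  rw [C5, C6, show 2 - 2 * q = 1 + (1 - 2 * q) by ring, Real.rpow_add hu, Real.rpow_one]
  ring

theorem integral_rpow_eq_C5_add_C6 {q u v : ℝ} (hu : 0 < u) (hv : 0 < v) (huv : u ≠ v)
    (hq : q ≠ 1) (hq' : 2 * q ≠ 1) :
    ∫ t in (0 : ℝ)..1, (u + (v - u) / 2 * t) ^ (-(2 * q)) =
      (C5 q u v + C6 q u v) / ((1 - q) * (1 - 2 * q) * (v - u) ^ 2) := by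
  have hvu : v - u ≠ 0 := sub_ne_zero.2 huv.symm
  rw [integral_affine_rpow hu (by linarith) (by simpa using hvu) (by contrapose! hq'; linarith),
    C5_add_C6 v hu, show u + (v - u) / 2 = (u + v) / 2 by ring,
    show -(2 * q) + 1 = 1 - 2 * q by ring]
  have : 1 - q ≠ 0 := sub_ne_zero.2 hq.symm
  have : 1 - 2 * q ≠ 0 := sub_ne_zero.2 hq'.symm
  field_simp
  ring

theorem abs_integral_sub_div_sq_le_C5_add_C6 {p q u v μ : ℝ} (hpq : p.HolderConjugate q)
    (hμ : μ ∈ Icc (0 : ℝ) 1) (hu : 0 < u) (hv : 0 < v) (huv : u ≠ v) :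
    |∫ t in (0 : ℝ)..1, (t - μ) / (u + (v - u) / 2 * t) ^ 2| ≤
      C4 μ p ^ (1 / p) * (C5 q u v + C6 q u v) ^ (1 / q) /
        ((1 - q) * (1 - 2 * q) * (v - u) ^ 2) ^ (1 / q) := by
  have hq : 1 < q := hpq.symm.lt
  have hD : 0 < (1 - q) * (1 - 2 * q) * (v - u) ^ 2 :=
    mul_pos (mul_pos_of_neg_of_neg (by linarith) (by linarith))
      (pow_two_pos_of_ne_zero (sub_ne_zero.2 huv.symm))
  have hI := integral_rpow_eq_C5_add_C6 hu hv huv hq.ne' (by linarith)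
  have hI_nonneg : 0 ≤ ∫ t in (0 : ℝ)..1, (u + (v - u) / 2 * t) ^ (-(2 * q)) :=
    intervalIntegral.integral_nonneg zero_le_one fun t ht ↦
      Real.rpow_nonneg (add_mul_pos_of_mem_Icc hu (by linarith) ht).le _
  have hX : 0 ≤ C5 q u v + C6 q u v := by
    rw [← div_mul_cancel₀ (C5 q u v + C6 q u v) hD.ne', ← hI]
    positivity
  rw [mul_div_assoc, ← Real.div_rpow hX hD.le, ← hI]
  exact abs_integral_sub_div_sq_le hpq hμ hu (by linarith)

theorem mean_combination_eq_integral {a b lam : ℝ} (ha : 0 < a) (hb : 0 < b) (hab : a ≠ b) :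
    (1 - lam) * (2 * a * b / (a + b)) + lam * ((a + b) / 2) -
        Real.sqrt (a * b) ^ 2 / ((b - a) / (Real.log b - Real.log a)) =
      a * b * (b - a) / 4 * ((∫ t in (0 : ℝ)..1, (t - lam) / (b + (a - b) / 2 * t) ^ 2) -
        ∫ t in (0 : ℝ)..1, (t - lam) / (a + (b - a) / 2 * t) ^ 2) := by
  have hba : b - a ≠ 0 := sub_ne_zero.2 hab.symm
  have hab' : a - b ≠ 0 := sub_ne_zero.2 hab
  have hlog : Real.log b - Real.log a ≠ 0 :=
    sub_ne_zero.2 fun h ↦ hab (Real.log_injOn_pos hb ha h).symm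
  rw [integral_sub_div_sq hb (by linarith) (by simpa using hab'),
    integral_sub_div_sq ha (by linarith) (by simpa using hba),
    show b + (a - b) / 2 = (a + b) / 2 by ring, show a + (b - a) / 2 = (a + b) / 2 by ring,
    Real.sq_sqrt (mul_pos ha hb).le]
  have : a + b ≠ 0 := by positivity
  field_simp
  ring

theorem prop_means3 (a b : ℝ) (ha : 0 < a) (hab : a < b)
    (lam : ℝ) (hlam : lam ∈ Icc (0:ℝ) 1)
    (p q : ℝ) (hq : 1 < q) (hpq : 1 / p + 1 / q = 1) :
    |(1 - lam) * (2 * a * b / (a + b)) + lam * ((a + b) / 2) -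
      Real.sqrt (a * b) ^ 2 / ((b - a) / (Real.log b - Real.log a))| ≤
      (a * b * (b - a) * C4 lam p ^ (1 / p) /
          (4 * (((1 - q) * (1 - 2 * q) * (b - a) ^ 2) ^ (1 / q)))) *
        ((C5 q a b + C6 q a b) ^ (1 / q) + (C6 q b a + C5 q b a) ^ (1 / q)) := by
  have hpq' : p.HolderConjugate q :=
    (Real.holderConjugate_iff.2 ⟨hq, by simpa only [one_div, add_comm] using hpq⟩).symm
  have hb : 0 < b := ha.trans hab
  have hscale : 0 < a * b * (b - a) / 4 := by have := sub_pos.2 hab; positivity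
  rw [mean_combination_eq_integral ha hb hab.ne, abs_mul, abs_of_pos hscale]
  calc _ ≤ a * b * (b - a) / 4 *
        (|∫ t in (0 : ℝ)..1, (t - lam) / (b + (a - b) / 2 * t) ^ 2| +
          |∫ t in (0 : ℝ)..1, (t - lam) / (a + (b - a) / 2 * t) ^ 2|) := by
        exact mul_le_mul_of_nonneg_left (abs_sub _ _) hscale.le
    _ ≤ a * b * (b - a) / 4 *
        (C4 lam p ^ (1 / p) * (C5 q b a + C6 q b a) ^ (1 / q) /
            ((1 - q) * (1 - 2 * q) * (a - b) ^ 2) ^ (1 / q) +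
          C4 lam p ^ (1 / p) * (C5 q a b + C6 q a b) ^ (1 / q) /
            ((1 - q) * (1 - 2 * q) * (b - a) ^ 2) ^ (1 / q)) := by
        gcongr
        · exact abs_integral_sub_div_sq_le_C5_add_C6 hpq' hlam hb ha hab.ne'
        · exact abs_integral_sub_div_sq_le_C5_add_C6 hpq' hlam ha hb hab.ne
    _ = _ := by
        rw [add_comm (C6 q b a), show (a - b) ^ 2 = (b - a) ^ 2 by ring]
        ring
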